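/- arXiv:2010.11100 — 2 statements merged into one kernel-verified Lean document; each statement's English description precedes it below -/
import Mathlib

section
/- Let H be an S_3-free cgh on Ω_n and let u and v be cyclically consecutive vertices of Ω_n (v = u+1). For a vertex w, let G_w' denote the set of edges of the link graph G_w that consist of two cyclically consecutive vertices of Ω_n. Then |G_u'| + |G_v'| ≤ n. -/
/-- The list of points of `ZMod n` occurs in this clockwise cyclic order:
anchored at the first point, the clockwise arc-distances from it are
positive and strictly increasing. -/
def CWList (n : ℕ) : List (ZMod n) → Prop
  | [] => True
  | a :: l => ((0 : ℕ) :: l.map fun b => (b - a).val).Chain' (· < ·)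

/-- `H` is a 3-uniform (convex geometric) hypergraph on `Ω_n = ZMod n`. -/
def IsCgh (n : ℕ) (H : Finset (Finset (ZMod n))) : Prop :=
  ∀ e ∈ H, e.card = 3

def nabla (n : ℕ) : ℕ :=
  if Odd n then n * (n - 1) * (n + 1) / 24 else n * (n - 2) * (n + 2) / 24

/-- `H` contains a copy of the configuration `S₃`: two triples sharing exactly
the vertex `v`, with the five vertices in clockwise cyclic order `v, a₁, b₁, a₂, b₂`. -/
def HasS3 (n : ℕ) (H : Finset (Finset (ZMod n))) : Prop :=
  ∃ v a₁ a₂ b₁ b₂ : ZMod n,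
    CWList n [v, a₁, b₁, a₂, b₂] ∧
    ({v, a₁, a₂} : Finset (ZMod n)) ∈ H ∧ ({v, b₁, b₂} : Finset (ZMod n)) ∈ H

/-!
Index the consecutive edges of the link of `u` by their second point and those of the link of
`u + 1` by their first point, so that `j` stands for `{j - 1, j}` and `{j, j + 1}` respectively.
For `j = u` or `j = u + 1` that edge contains the centre of its link, so both index sets avoid
`u` and `u + 1`. For any other `j` in both sets except `u - 1` and `u + 2`, the triples
`{j, j + 1, u + 1}` and `{j, u, j - 1}` form an `S₃` at `j`, the cyclic order being
`j, j + 1, u, u + 1, j - 1`. So the two index sets have at most `n - 2` points together and at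
most two in common.
-/

theorem Finset.card_add_card_le_of_inter_subset {α : Type*} [Fintype α] [DecidableEq α]
    {A B s t : Finset α} (hA : A ⊆ sᶜ) (hB : B ⊆ sᶜ) (hAB : A ∩ B ⊆ t) (hts : t.card ≤ s.card) :
    A.card + B.card ≤ Fintype.card α := by
  rw [← Finset.card_union_add_card_inter]
  have hunion := Finset.card_le_card (Finset.union_subset hA hB)
  rw [Finset.card_compl] at hunion
  have hinter := Finset.card_le_card hAB
  have hs := Finset.card_le_univ s
  omega

theorem cwList_add_natCast {n : ℕ} (v : ZMod n) {a b c d : ℕ}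
    (ha : 0 < a) (hab : a < b) (hbc : b < c) (hcd : c < d) (hd : d < n) :
    CWList n [v, v + a, v + b, v + c, v + d] := by
  simp only [CWList, List.map_cons, List.map_nil, add_sub_cancel_left,
    ZMod.val_cast_of_lt (hab.trans (hbc.trans (hcd.trans hd))),
    ZMod.val_cast_of_lt (hbc.trans (hcd.trans hd)), ZMod.val_cast_of_lt (hcd.trans hd),
    ZMod.val_cast_of_lt hd]
  exact .cons_cons ha <| .cons_cons hab <| .cons_cons hbc <| .cons_cons hcd <| .singleton d

namespace ZMod

theorem two_le_val_of_ne {n : ℕ} [NeZero n] {x : ZMod n} (h0 : x ≠ 0) (h1 : x ≠ 1)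
    (hm1 : x + 1 ≠ 0) (hm2 : x + 2 ≠ 0) : 2 ≤ x.val ∧ x.val + 3 ≤ n := by
  have hcast : ∀ k : ℕ, x.val = k → x = k := fun k hk => by rw [← hk, ZMod.natCast_zmod_val]
  have hlt := ZMod.val_lt x
  have hv0 : x.val ≠ 0 := fun h => h0 (by simpa using hcast 0 h)
  have hv1 : x.val ≠ 1 := fun h => h1 (by simpa using hcast 1 h)
  have hvn1 : x.val + 1 ≠ n := fun h => hm1 (by
    rw [hcast (n - 1) (by omega), Nat.cast_sub (by omega), ZMod.natCast_self]; ring)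
  have hvn2 : x.val + 2 ≠ n := fun h => hm2 (by
    rw [hcast (n - 2) (by omega), Nat.cast_sub (by omega), ZMod.natCast_self]; ring)
  omega

end ZMod

section ConsecutiveLink

variable {n : ℕ} {H : Finset (Finset (ZMod n))}

theorem IsCgh.ne_of_mem (hH : IsCgh n H) {a b c : ZMod n} (h : ({a, b, c} : Finset _) ∈ H) :
    a ≠ b ∧ a ≠ c ∧ b ≠ c := by
  have hcard := hH _ h
  refine ⟨?_, ?_, ?_⟩ <;> rintro rfl
  · have := Finset.card_le_two (a := a) (b := c)
    simp_all
  · have := Finset.card_le_two (a := a) (b := b)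
    simp_all [Finset.pair_comm]
  · have := Finset.card_le_two (a := a) (b := b)
    simp_all

theorem hasS3_of_consecutive (v x : ZMod n) (hx : 2 ≤ x.val) (hxn : x.val + 3 ≤ n)
    (hleft : ({v + x, v - 1, v} : Finset _) ∈ H) (hright : ({v + x + 1, v, v + 1} : Finset _) ∈ H) :
    HasS3 n H := by
  have : NeZero n := ⟨by omega⟩
  have hx_cast : ((x.val : ℕ) : ZMod n) = x := ZMod.natCast_zmod_val x
  have hx1_cast : ((x.val + 1 : ℕ) : ZMod n) = x + 1 := by push_cast [hx_cast]; rfl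
  have hneg_cast : ((n - 1 : ℕ) : ZMod n) = -1 := by
    rw [Nat.cast_sub (by omega), ZMod.natCast_self]; ring
  refine ⟨v, v + (1 : ℕ), v + (x.val + 1 : ℕ), v + (x.val : ℕ), v + (n - 1 : ℕ),
    cwList_add_natCast v one_pos (by omega) (by omega) (by omega) (by omega), ?_, ?_⟩
  · rw [hx1_cast, Nat.cast_one, ← add_assoc]
    convert hright using 1
    ext; simp only [Finset.mem_insert, Finset.mem_singleton]; tauto
  · rw [hx_cast, hneg_cast, ← sub_eq_add_neg]
    convert hleft using 1
    ext; simp only [Finset.mem_insert, Finset.mem_singleton]; tauto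

variable [NeZero n]

def consecLink (H : Finset (Finset (ZMod n))) (w : ZMod n) : Finset (ZMod n) :=
  {j | ({w, j, j + 1} : Finset _) ∈ H}

theorem mem_consecLink {w j : ZMod n} : j ∈ consecLink H w ↔ ({w, j, j + 1} : Finset _) ∈ H := by
  simp [consecLink]

theorem ncard_consecLinkEdges_le (w : ZMod n) :
    {p : Finset (ZMod n) | ∃ j : ZMod n, p = {j, j + 1} ∧
      ({w, j, j + 1} : Finset (ZMod n)) ∈ H}.ncard ≤ (consecLink H w).card := by
  have himage : {p : Finset (ZMod n) | ∃ j : ZMod n, p = {j, j + 1} ∧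
      ({w, j, j + 1} : Finset (ZMod n)) ∈ H} =
      (fun j : ZMod n => ({j, j + 1} : Finset (ZMod n))) '' (consecLink H w : Set (ZMod n)) := by
    ext p
    simp only [Set.mem_ofPred_eq, Set.mem_image, Finset.mem_coe, mem_consecLink]
    exact ⟨fun ⟨j, hp, hj⟩ => ⟨j, hj, hp.symm⟩, fun ⟨j, hj, hp⟩ => ⟨j, hp.symm, hj⟩⟩
  rw [himage, ← Set.ncard_coe_finset (consecLink H w)]
  exact Set.ncard_image_le (Set.toFinite _)

theorem consecLink_subset (hH : IsCgh n H) (w : ZMod n) : consecLink H w ⊆ {w - 1, w}ᶜ := by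
  intro j hj
  obtain ⟨hwj, hwj1, -⟩ := hH.ne_of_mem (mem_consecLink.mp hj)
  simp only [Finset.mem_compl, Finset.mem_insert, Finset.mem_singleton, not_or]
  exact ⟨fun h => hwj1 (by rw [h]; ring), fun h => hwj h.symm⟩

theorem mem_map_addRight_consecLink {w j : ZMod n} :
    j ∈ (consecLink H w).map (Equiv.addRight 1).toEmbedding ↔ ({w, j - 1, j} : Finset _) ∈ H := by
  simp only [Finset.mem_map_equiv, Equiv.addRight_symm, Equiv.coe_addRight, mem_consecLink,
    ← sub_eq_add_neg, sub_add_cancel]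

theorem map_addRight_consecLink_subset (hH : IsCgh n H) (w : ZMod n) :
    (consecLink H w).map (Equiv.addRight 1).toEmbedding ⊆ {w, w + 1}ᶜ := by
  intro j hj
  obtain ⟨hwj1, hwj, -⟩ := hH.ne_of_mem (mem_map_addRight_consecLink.mp hj)
  simp only [Finset.mem_compl, Finset.mem_insert, Finset.mem_singleton, not_or]
  exact ⟨fun h => hwj h.symm, fun h => hwj1 (by rw [h]; ring)⟩

theorem map_addRight_consecLink_inter_consecLink_subset (hH : IsCgh n H) (hfree : ¬ HasS3 n H)
    (u : ZMod n) :
    (consecLink H u).map (Equiv.addRight 1).toEmbedding ∩ consecLink H (u + 1) ⊆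
      {u - 1, u + 2} := by
  intro j hj
  rw [Finset.mem_inter, mem_map_addRight_consecLink, mem_consecLink] at hj
  obtain ⟨hleft, hright⟩ := hj
  obtain ⟨-, huj, -⟩ := hH.ne_of_mem hleft
  obtain ⟨hu1j, -, -⟩ := hH.ne_of_mem hright
  by_contra hj
  simp only [Finset.mem_insert, Finset.mem_singleton, not_or] at hj
  obtain ⟨hx, hxn⟩ := ZMod.two_le_val_of_ne (x := u - j) (sub_ne_zero.mpr huj)
    (fun h => hj.1 (by linear_combination -h)) (fun h => hu1j (by linear_combination h))
    (fun h => hj.2 (by linear_combination -h))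
  refine hfree (hasS3_of_consecutive j (u - j) hx hxn ?_ ?_)
  · rwa [add_sub_cancel]
  · rwa [add_sub_cancel]

end ConsecutiveLink

theorem S3_link_cons (n : ℕ) (hn : 3 ≤ n)
    (H : Finset (Finset (ZMod n))) (hcgh : IsCgh n H) (hfree : ¬ HasS3 n H)
    (u : ZMod n) :
    {p : Finset (ZMod n) | ∃ j : ZMod n, p = {j, j + 1} ∧
        ({u, j, j + 1} : Finset (ZMod n)) ∈ H}.ncard +
    {p : Finset (ZMod n) | ∃ j : ZMod n, p = {j, j + 1} ∧
        ({u + 1, j, j + 1} : Finset (ZMod n)) ∈ H}.ncard ≤ n := by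
  have : Fact (1 < n) := ⟨by omega⟩
  have hu : u ≠ u + 1 := by simp
  have hcard : ({u - 1, u + 2} : Finset (ZMod n)).card ≤ ({u, u + 1} : Finset (ZMod n)).card := by
    rw [Finset.card_pair hu]
    exact Finset.card_le_two
  have hB : consecLink H (u + 1) ⊆ {u, u + 1}ᶜ := by
    simpa using consecLink_subset hcgh (u + 1)
  calc _ ≤ ((consecLink H u).map (Equiv.addRight 1).toEmbedding).card
          + (consecLink H (u + 1)).card := by
        rw [Finset.card_map]
        exact add_le_add (ncard_consecLinkEdges_le u) (ncard_consecLinkEdges_le (u + 1))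
    _ ≤ Fintype.card (ZMod n) :=
        Finset.card_add_card_le_of_inter_subset (map_addRight_consecLink_subset hcgh u) hB
          (map_addRight_consecLink_inter_consecLink_subset hcgh hfree u) hcard
    _ = n := ZMod.card n
end

section
/- Let H be an S_2-free cgh on Ω_n. Then: (1) every triple e ∈ H has at least two of its three pairs good for e; and (2) every pair in the shadow ∂H is good for at least one and at most two triples of H. -/
/-- `H` contains a copy of the configuration `S₂`: two triples sharing exactly
the vertex `v`, with the five vertices in clockwise cyclic order `v, b₁, a₁, a₂, b₂`. -/
def HasS2 (n : ℕ) (H : Finset (Finset (ZMod n))) : Prop :=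
  ∃ v a₁ a₂ b₁ b₂ : ZMod n,
    CWList n [v, b₁, a₁, a₂, b₂] ∧
    ({v, a₁, a₂} : Finset (ZMod n)) ∈ H ∧ ({v, b₁, b₂} : Finset (ZMod n)) ∈ H

/-- With `x, y, z` in clockwise cyclic order and `{x, y, z} ∈ H`, the pair
`{x, y}` is good for `{x, y, z}`: there is no `z'` strictly in the clockwise
arc from `y` to `z` with `{x, y, z'} ∈ H`. -/
def GoodFor (n : ℕ) (H : Finset (Finset (ZMod n))) (x y z : ZMod n) : Prop :=
  ¬ ∃ z' : ZMod n, CWList n [y, z', z] ∧ ({x, y, z'} : Finset (ZMod n)) ∈ H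

/-!
Measure positions by clockwise distance `(y - x).val`. A pair `{x, y}` of `{x, y, z}` is good
exactly when `z` is the first vertex clockwise after `y` (before returning to `x`) that completes
`{x, y}` to a triple of `H`. Hence each side of a shadow pair has at most one good triple, and at
least one on a side where some triple lies, giving (2). For (1), if two consecutive pairs `ab`,
`bc` of a clockwise triple `abc` are bad, the witnesses `z` (between `b` and `c`) and `w` (between
`c` and `a`) give triples `{b, z, a}` and `{b, c, w}` whose chords from `b` are nested: an `S₂`.
-/

section CyclicOrder

lemma cwList_three_iff {n : ℕ} (a b c : ZMod n) :
    CWList n [a, b, c] ↔ 0 < (b - a).val ∧ (b - a).val < (c - a).val := by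
  change List.IsChain _ _ ↔ _
  simp only [List.map_cons, List.map_nil, List.isChain_cons_cons, List.isChain_singleton, and_true]

lemma cwList_five_iff {n : ℕ} (a b c d e : ZMod n) :
    CWList n [a, b, c, d, e] ↔
      CWList n [a, b, c] ∧ CWList n [a, c, d] ∧ CWList n [a, d, e] := by
  simp only [cwList_three_iff]
  change List.IsChain _ _ ↔ _
  simp only [List.map_cons, List.map_nil, List.isChain_cons_cons, List.isChain_singleton, and_true]
  omega

lemma cwList_trans {n : ℕ} {a b c d : ZMod n} (habc : CWList n [a, b, c])
    (hacd : CWList n [a, c, d]) : CWList n [a, b, d] := by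
  rw [cwList_three_iff] at *
  omega

variable {n : ℕ} [NeZero n]

lemma val_sub_add_val_sub (x y z : ZMod n) :
    (y - x).val + (z - y).val = (z - x).val ∨ (y - x).val + (z - y).val = (z - x).val + n := by
  have hsum : (z - x).val = ((y - x).val + (z - y).val) % n := by
    rw [← ZMod.val_add, sub_add_sub_cancel']
  have := ZMod.val_lt (y - x)
  have := ZMod.val_lt (z - y)
  rcases Nat.lt_or_ge ((y - x).val + (z - y).val) n with hlt | hge
  · left; rw [hsum, Nat.mod_eq_of_lt hlt]
  · right; rw [hsum, Nat.mod_eq_sub_mod hge, Nat.mod_eq_of_lt (by omega)]; omega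

lemma cwList_rotate {a b c : ZMod n} (h : CWList n [a, b, c]) : CWList n [b, c, a] := by
  rw [cwList_three_iff] at h ⊢
  have := val_sub_add_val_sub a b c
  have := val_sub_add_val_sub a b a
  have := ZMod.val_lt (c - b)
  have := ZMod.val_lt (c - a)
  rw [sub_self, ZMod.val_zero] at *
  omega

lemma cwList_rotate_iff (a b c : ZMod n) : CWList n [a, b, c] ↔ CWList n [b, c, a] :=
  ⟨cwList_rotate, fun h => cwList_rotate (cwList_rotate h)⟩

lemma cwList_split {a b c d : ZMod n} (habd : CWList n [a, b, d]) (hbcd : CWList n [b, c, d]) :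
    CWList n [a, b, c] ∧ CWList n [a, c, d] := by
  simp only [cwList_three_iff] at *
  have := val_sub_add_val_sub a b c
  have := val_sub_add_val_sub a b d
  have := ZMod.val_lt (c - a)
  have := ZMod.val_lt (d - a)
  have := ZMod.val_lt (d - b)
  omega

lemma cwList_or_cwList_swap {a b c : ZMod n} (hab : a ≠ b) (hbc : b ≠ c) (hac : a ≠ c) :
    CWList n [a, b, c] ∨ CWList n [b, a, c] := by
  have hval : ∀ {x y : ZMod n}, x ≠ y → (y - x).val ≠ 0 := fun hxy h =>
    hxy (sub_eq_zero.mp ((ZMod.val_eq_zero _).mp h)).symm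
  rcases Nat.lt_trichotomy (b - a).val (c - a).val with hlt | heq | hgt
  · exact Or.inl ((cwList_three_iff a b c).2 ⟨Nat.pos_of_ne_zero (hval hab), hlt⟩)
  · exact absurd (sub_left_injective (ZMod.val_injective n heq)) hbc
  · exact Or.inr (cwList_rotate (cwList_rotate
      ((cwList_three_iff a c b).2 ⟨Nat.pos_of_ne_zero (hval hac), hgt⟩)))

end CyclicOrder

lemma Finset.exists_eq_triple_of_card_eq_three {α : Type*} [DecidableEq α] {e : Finset α}
    {u v : α} (he : e.card = 3) (hu : u ∈ e) (hv : v ∈ e) (huv : u ≠ v) :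
    ∃ w, w ≠ u ∧ w ≠ v ∧ e = {u, v, w} := by
  have hsub : {u, v} ⊆ e := Finset.insert_subset hu (Finset.singleton_subset_iff.2 hv)
  obtain ⟨w, hw⟩ : ∃ w, e \ {u, v} = {w} := by
    rw [← Finset.card_eq_one, Finset.card_sdiff_of_subset hsub, he, Finset.card_pair huv]
  have hwe : w ∈ e \ {u, v} := hw ▸ Finset.mem_singleton_self w
  simp only [Finset.mem_sdiff, Finset.mem_insert, Finset.mem_singleton, not_or] at hwe
  refine ⟨w, hwe.2.1, hwe.2.2, ?_⟩
  rw [← Finset.union_sdiff_of_subset hsub, hw, Finset.insert_union, ← Finset.insert_eq]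

section GoodPairs

variable {n : ℕ} [NeZero n] {H : Finset (Finset (ZMod n))}

lemma hasS2_of_not_goodFor {a b c : ZMod n} (habc : CWList n [a, b, c])
    (hab : ¬ GoodFor n H a b c) (hbc : ¬ GoodFor n H b c a) : HasS2 n H := by
  obtain ⟨z, hbzc, hz⟩ := not_not.1 hab
  obtain ⟨w, hcwa, hw⟩ := not_not.1 hbc
  obtain ⟨hbcw, hbwa⟩ := cwList_split (cwList_rotate habc) hcwa
  refine ⟨b, c, w, z, a, (cwList_five_iff _ _ _ _ _).2 ⟨hbzc, hbcw, hbwa⟩, hw, ?_⟩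
  rwa [Finset.pair_comm, Finset.insert_comm]

lemma two_goodFor_of_not_hasS2 (hfree : ¬ HasS2 n H) {a b c : ZMod n}
    (habc : CWList n [a, b, c]) :
    (GoodFor n H a b c ∧ GoodFor n H b c a) ∨ (GoodFor n H a b c ∧ GoodFor n H c a b) ∨
      (GoodFor n H b c a ∧ GoodFor n H c a b) := by
  have hbca := cwList_rotate habc
  have hcab := cwList_rotate hbca
  have := fun h₁ h₂ => hfree (hasS2_of_not_goodFor habc h₁ h₂)
  have := fun h₁ h₂ => hfree (hasS2_of_not_goodFor hbca h₁ h₂)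
  have := fun h₁ h₂ => hfree (hasS2_of_not_goodFor hcab h₁ h₂)
  tauto

variable (H) in
def goodThirds (u v : ZMod n) : Set (ZMod n) :=
  {z | ({u, v, z} : Finset (ZMod n)) ∈ H ∧ CWList n [u, v, z] ∧ GoodFor n H u v z}

lemma goodThirds_subsingleton (u v : ZMod n) : (goodThirds H u v).Subsingleton := by
  rintro z₁ ⟨h₁, c₁, g₁⟩ z₂ ⟨h₂, c₂, g₂⟩
  rw [cwList_rotate_iff, cwList_three_iff] at c₁ c₂
  rcases Nat.lt_trichotomy (z₁ - v).val (z₂ - v).val with hlt | heq | hgt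
  · exact absurd ⟨z₁, (cwList_three_iff v z₁ z₂).2 ⟨c₁.1, hlt⟩, h₁⟩ g₂
  · exact sub_left_injective (ZMod.val_injective n heq)
  · exact absurd ⟨z₂, (cwList_three_iff v z₂ z₁).2 ⟨c₂.1, hgt⟩, h₂⟩ g₁

lemma goodThirds_nonempty {u v w : ZMod n} (hw : ({u, v, w} : Finset (ZMod n)) ∈ H)
    (huvw : CWList n [u, v, w]) : (goodThirds H u v).Nonempty := by
  classical
  let T := Finset.univ.filter fun z => ({u, v, z} : Finset (ZMod n)) ∈ H ∧ CWList n [v, z, u]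
  have hwT : w ∈ T := by simpa [T, ← cwList_rotate_iff] using ⟨hw, huvw⟩
  obtain ⟨z, hzT, hmin⟩ := T.exists_min_image (fun z => (z - v).val) ⟨w, hwT⟩
  obtain ⟨hz, hvzu⟩ := (Finset.mem_filter.1 hzT).2
  refine ⟨z, hz, (cwList_rotate_iff _ _ _).2 hvzu, ?_⟩
  rintro ⟨z', hvz'z, hz'⟩
  have hz'T : z' ∈ T := Finset.mem_filter.2 ⟨Finset.mem_univ _, hz', cwList_trans hvz'z hvzu⟩
  have := hmin z' hz'T
  rw [cwList_three_iff] at hvz'z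
  omega

end GoodPairs

theorem S2_good_pairs (n : ℕ) (hn : 3 ≤ n)
    (H : Finset (Finset (ZMod n))) (hcgh : IsCgh n H) (hfree : ¬ HasS2 n H) :
    (∀ a b c : ZMod n, CWList n [a, b, c] → ({a, b, c} : Finset (ZMod n)) ∈ H →
      ((GoodFor n H a b c ∧ GoodFor n H b c a) ∨
       (GoodFor n H a b c ∧ GoodFor n H c a b) ∨
       (GoodFor n H b c a ∧ GoodFor n H c a b))) ∧
    (∀ u v : ZMod n, u ≠ v → (∃ e ∈ H, u ∈ e ∧ v ∈ e) →
      1 ≤ {z : ZMod n | ({u, v, z} : Finset (ZMod n)) ∈ H ∧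
            ((CWList n [u, v, z] ∧ GoodFor n H u v z) ∨
             (CWList n [v, u, z] ∧ GoodFor n H v u z))}.ncard ∧
      {z : ZMod n | ({u, v, z} : Finset (ZMod n)) ∈ H ∧
            ((CWList n [u, v, z] ∧ GoodFor n H u v z) ∨
             (CWList n [v, u, z] ∧ GoodFor n H v u z))}.ncard ≤ 2) := by
  have : NeZero n := ⟨by omega⟩
  refine ⟨fun a b c habc _ => two_goodFor_of_not_hasS2 hfree habc, ?_⟩
  rintro u v huv ⟨e, he, hu, hv⟩
  obtain ⟨w, hwu, hwv, rfl⟩ := Finset.exists_eq_triple_of_card_eq_three (hcgh e he) hu hv huv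
  have hsides : {z : ZMod n | ({u, v, z} : Finset (ZMod n)) ∈ H ∧
      ((CWList n [u, v, z] ∧ GoodFor n H u v z) ∨ (CWList n [v, u, z] ∧ GoodFor n H v u z))} =
      goodThirds H u v ∪ goodThirds H v u := by
    ext z
    simp only [goodThirds, Set.mem_union, Set.mem_ofPred_eq, Finset.insert_comm v u]
    tauto
  rw [hsides]
  constructor
  · have hne : (goodThirds H u v ∪ goodThirds H v u).Nonempty := by
      rcases cwList_or_cwList_swap huv hwv.symm hwu.symm with h | h
      · exact (goodThirds_nonempty he h).mono Set.subset_union_left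
      · rw [Finset.insert_comm] at he
        exact (goodThirds_nonempty he h).mono Set.subset_union_right
    exact (Set.ncard_pos).2 hne
  · calc _ ≤ (goodThirds H u v).ncard + (goodThirds H v u).ncard := Set.ncard_union_le _ _
      _ ≤ 1 + 1 := add_le_add
          (Set.ncard_le_one_iff_subsingleton.2 (goodThirds_subsingleton u v))
          (Set.ncard_le_one_iff_subsingleton.2 (goodThirds_subsingleton v u))
end
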